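/- Assume 0 < G_t(x_t) ≤ g_t for all x_t ∈ 𝒳 and all t. Then the forced-move CPF kernel dominates the CPF kernel in Peskun ordering: for every z_T ∈ 𝒳^{T+1} and every measurable set 𝒜 ⊆ 𝒳^{T+1} with z_T ∉ 𝒜, P^{FM}_T(z_T, 𝒜) ≥ P_T^N(z_T, 𝒜). -/

import Mathlib

open MeasureTheory ProbabilityTheory Filter
open scoped ENNReal Topology

namespace ParticleGibbs

variable {𝒳 : Type*} [MeasurableSpace 𝒳]

/-- Normalised resampling weights `W_t^n`. -/
noncomputable def weight {N : ℕ} (G : 𝒳 → ℝ) (x : Fin N → 𝒳) (n : Fin N) : ℝ :=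
  G (x n) / ∑ j, G (x j)

/-- Unnormalised Feynman–Kac path measure `γ_t` on `𝒳^{t+1}`. -/
noncomputable def fk (m0 : Measure 𝒳) (m : ℕ → Kernel 𝒳 𝒳) (G : ℕ → 𝒳 → ℝ) :
    (t : ℕ) → Measure (Fin (t + 1) → 𝒳)
  | 0 => m0.map fun x => fun _ => x
  | t + 1 =>
      (fk m0 m G t).bind fun z =>
        ENNReal.ofReal (G t (z (Fin.last t))) •
          ((m (t + 1)) (z (Fin.last t))).map fun x => Fin.snoc z x

/-- The Feynman–Kac normalising constant `Z_T`. -/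
noncomputable def fkZ (m0 : Measure 𝒳) (m : ℕ → Kernel 𝒳 𝒳) (G : ℕ → 𝒳 → ℝ) (T : ℕ) : ℝ≥0∞ :=
  fk m0 m G T Set.univ

/-- The normalised Feynman–Kac path measure `Q_T`. -/
noncomputable def fkQ (m0 : Measure 𝒳) (m : ℕ → Kernel 𝒳 𝒳) (G : ℕ → 𝒳 → ℝ) (T : ℕ) :
    Measure (Fin (T + 1) → 𝒳) :=
  (fkZ m0 m G T)⁻¹ • fk m0 m G T

/-- Multinomial selection distribution on labels, with probabilities `W^n`. -/
noncomputable def select {N : ℕ} (G : 𝒳 → ℝ) (x : Fin N → 𝒳) : Measure (Fin N) :=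
  ∑ n : Fin N, ENNReal.ofReal (weight G x n) • Measure.dirac n

/-- Multinomial resampling distribution: the ancestors are i.i.d. draws from `select`. -/
noncomputable def multinomialR {N : ℕ} (G : 𝒳 → ℝ) (x : Fin N → 𝒳) :
    Measure (Fin N → Fin N) :=
  Measure.pi fun _ : Fin N => select G x

/-- The law `θ_T^N` of the interacting particle system (states and ancestor variables). -/
noncomputable def particleLaw (N : ℕ) (m0 : Measure 𝒳) (m : ℕ → Kernel 𝒳 𝒳)
    (R : ℕ → (Fin N → 𝒳) → Measure (Fin N → Fin N)) :
    (t : ℕ) → Measure ((Fin (t + 1) → Fin N → 𝒳) × (Fin t → Fin N → Fin N))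
  | 0 => (Measure.pi fun _ : Fin N => m0).map fun x0 => (fun _ => x0, fun i => i.elim0)
  | t + 1 =>
      (particleLaw N m0 m R t).bind fun p =>
        (R t (p.1 (Fin.last t))).bind fun a =>
          (Measure.pi fun n : Fin N => (m (t + 1)) (p.1 (Fin.last t) (a n))).map fun xnew =>
            (Fin.snoc p.1 xnew, Fin.snoc p.2 a)

/-- Auxiliary backward recursion for ancestral lineages: `ancAux T a n k = B_{T-k}`
where `B_T = n` and `B_t = a_t (B_{t+1})`. -/
def ancAux {N : ℕ} (T : ℕ) (a : Fin T → Fin N → Fin N) (n : Fin N) : ℕ → Fin N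
  | 0 => n
  | k + 1 => if h : T - (k + 1) < T then a ⟨T - (k + 1), h⟩ (ancAux T a n k) else n

/-- The ancestral lineage `B` of the particle with final label `n`. -/
def lineage {N T : ℕ} (a : Fin T → Fin N → Fin N) (n : Fin N) : Fin (T + 1) → Fin N :=
  fun t => ancAux T a n (T - (t : ℕ))

/-- The trajectory `Z_T^n` of the particle with final label `n`. -/
def traj {N T : ℕ} (x : Fin (T + 1) → Fin N → 𝒳) (a : Fin T → Fin N → Fin N) (n : Fin N) :
    Fin (T + 1) → 𝒳 :=
  fun t => x t (lineage a n t)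

/-- The extended target distribution `π_T^N` on particles, ancestors and the selected index. -/
noncomputable def piTN (N : ℕ) (m0 : Measure 𝒳) (m : ℕ → Kernel 𝒳 𝒳) (G : ℕ → 𝒳 → ℝ)
    (R : ℕ → (Fin N → 𝒳) → Measure (Fin N → Fin N)) (T : ℕ) :
    Measure (((Fin (T + 1) → Fin N → 𝒳) × (Fin T → Fin N → Fin N)) × Fin N) :=
  (fkZ m0 m G T)⁻¹ •
    ((particleLaw N m0 m R T).withDensity fun p =>
        ENNReal.ofReal (∏ t : Fin T, (N : ℝ)⁻¹ * ∑ n, G t (p.1 t.castSucc n))).bind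
      fun p =>
        (∑ n : Fin N, ENNReal.ofReal ((N : ℝ)⁻¹ * G T (p.1 (Fin.last T) n)) •
            Measure.dirac n).map fun n => (p, n)

/-- The conditional distribution of the whole ancestor vector given `A^n = m`. -/
noncomputable def condAncestor {N : ℕ} (R : Measure (Fin N → Fin N)) (n m : Fin N) :
    Measure (Fin N → Fin N) :=
  (R {a | a n = m})⁻¹ • R.restrict {a | a n = m}

/-- CPF step 1: the law of the conditional particle system, where at each time `t` the
particle labelled `i t` is frozen at `z t` and the ancestor constraint `A_t^{i(t+1)} = i t`
holds. -/
noncomputable def cpfSystem (N : ℕ) (m0 : Measure 𝒳) (m : ℕ → Kernel 𝒳 𝒳)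
    (R : ℕ → (Fin N → 𝒳) → Measure (Fin N → Fin N)) (z : ℕ → 𝒳) (i : ℕ → Fin N) :
    (t : ℕ) → Measure ((Fin (t + 1) → Fin N → 𝒳) × (Fin t → Fin N → Fin N))
  | 0 => (Measure.pi fun n : Fin N => if n = i 0 then Measure.dirac (z 0) else m0).map
      fun x0 => (fun _ => x0, fun j => j.elim0)
  | t + 1 =>
      (cpfSystem N m0 m R z i t).bind fun p =>
        (condAncestor (R t (p.1 (Fin.last t))) (i (t + 1)) (i t)).bind fun a =>
          (Measure.pi fun n : Fin N =>
              if n = i (t + 1) then Measure.dirac (z (t + 1))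
              else (m (t + 1)) (p.1 (Fin.last t) (a n))).map fun xnew =>
            (Fin.snoc p.1 xnew, Fin.snoc p.2 a)

def extendPath {T : ℕ} (z : Fin (T + 1) → 𝒳) : ℕ → 𝒳 :=
  fun t => z ⟨min t T, Nat.lt_succ_of_le (Nat.min_le_right t T)⟩

def extendIdx {N T : ℕ} (i : Fin (T + 1) → Fin N) : ℕ → Fin N :=
  fun t => i ⟨min t T, Nat.lt_succ_of_le (Nat.min_le_right t T)⟩

/-- The CPF kernel with a general assignment `i` of the frozen ancestry. -/
noncomputable def cpfKernelAux (N : ℕ) (m0 : Measure 𝒳) (m : ℕ → Kernel 𝒳 𝒳)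
    (G : ℕ → 𝒳 → ℝ) (R : ℕ → (Fin N → 𝒳) → Measure (Fin N → Fin N)) (T : ℕ)
    (z : ℕ → 𝒳) (i : ℕ → Fin N) : Measure (Fin (T + 1) → 𝒳) :=
  (cpfSystem N m0 m R z i T).bind fun p =>
    (select (G T) (p.1 (Fin.last T))).bind fun n => Measure.dirac (traj p.1 p.2 n)

/-- The CPF (conditional particle filter / Particle Gibbs) Markov kernel `P_T^N`. -/
noncomputable def cpfKernel (N : ℕ) (m0 : Measure 𝒳) (m : ℕ → Kernel 𝒳 𝒳)
    (G : ℕ → 𝒳 → ℝ) (R : ℕ → (Fin N → 𝒳) → Measure (Fin N → Fin N)) (T : ℕ)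
    (z : Fin (T + 1) → 𝒳) : Measure (Fin (T + 1) → 𝒳) :=
  if hN : 0 < N then cpfKernelAux N m0 m G R T (extendPath z) fun _ => (⟨0, hN⟩ : Fin N)
  else 0

/-- Conditional probability that `A^b = v` given the other components `A^{-b} = a^{-b}`,
relative to a resampling distribution `R`. -/
noncomputable def condPMF {N : ℕ} (R : Measure (Fin N → Fin N)) (b : Fin N)
    (a : Fin N → Fin N) (v : Fin N) : ℝ≥0∞ :=
  R {Function.update a b v} / R {a' | ∀ j, j ≠ b → a' j = a j}

/-- Unnormalised backward-sampling weight of value `v` for `B_t`, given `B_{t+1} = b`. -/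
noncomputable def bsWeight {N T : ℕ} (R : ℕ → (Fin N → 𝒳) → Measure (Fin N → Fin N))
    (dens : ℕ → 𝒳 → 𝒳 → ℝ) (x : Fin (T + 1) → Fin N → 𝒳) (a : Fin T → Fin N → Fin N)
    (t : Fin T) (b v : Fin N) : ℝ≥0∞ :=
  condPMF (R t (x t.castSucc)) b (a t) v *
    ENNReal.ofReal (dens ((t : ℕ) + 1) (x t.castSucc v) (x t.succ b))

/-- One backward-sampling update, redrawing `B_t` given `B_{t+1}`. -/
noncomputable def bsStep {N T : ℕ} (R : ℕ → (Fin N → 𝒳) → Measure (Fin N → Fin N))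
    (dens : ℕ → 𝒳 → 𝒳 → ℝ) (x : Fin (T + 1) → Fin N → 𝒳) (a : Fin T → Fin N → Fin N)
    (t : Fin T) (B : Fin (T + 1) → Fin N) : Measure (Fin (T + 1) → Fin N) :=
  ∑ v : Fin N,
    (bsWeight R dens x a t (B t.succ) v /
        ∑ u : Fin N, bsWeight R dens x a t (B t.succ) u) •
      Measure.dirac (Function.update B t.castSucc v)

/-- The law of the backward-sampled lineage (step CPF-3), started from `B_T = nstar`. -/
noncomputable def bsLaw {N T : ℕ} (R : ℕ → (Fin N → 𝒳) → Measure (Fin N → Fin N))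
    (dens : ℕ → 𝒳 → 𝒳 → ℝ) (x : Fin (T + 1) → Fin N → 𝒳) (a : Fin T → Fin N → Fin N)
    (nstar : Fin N) : Measure (Fin (T + 1) → Fin N) :=
  ((List.finRange T).reverse).foldl (fun μ t => μ.bind (bsStep R dens x a t))
    (Measure.dirac fun _ => nstar)

/-- The CPF-BS kernel with general frozen-ancestry assignment `i`. -/
noncomputable def cpfBSKernelAux (N : ℕ) (m0 : Measure 𝒳) (m : ℕ → Kernel 𝒳 𝒳)
    (G : ℕ → 𝒳 → ℝ) (R : ℕ → (Fin N → 𝒳) → Measure (Fin N → Fin N))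
    (dens : ℕ → 𝒳 → 𝒳 → ℝ) (T : ℕ) (z : ℕ → 𝒳) (i : ℕ → Fin N) :
    Measure (Fin (T + 1) → 𝒳) :=
  (cpfSystem N m0 m R z i T).bind fun p =>
    (select (G T) (p.1 (Fin.last T))).bind fun n =>
      (bsLaw R dens p.1 p.2 n).bind fun B => Measure.dirac fun t => p.1 t (B t)

/-- The CPF-BS (conditional particle filter with backward sampling) kernel `P_T^{N,B}`. -/
noncomputable def cpfBSKernel (N : ℕ) (m0 : Measure 𝒳) (m : ℕ → Kernel 𝒳 𝒳)
    (G : ℕ → 𝒳 → ℝ) (R : ℕ → (Fin N → 𝒳) → Measure (Fin N → Fin N))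
    (dens : ℕ → 𝒳 → 𝒳 → ℝ) (T : ℕ) (z : Fin (T + 1) → 𝒳) :
    Measure (Fin (T + 1) → 𝒳) :=
  if hN : 0 < N then
    cpfBSKernelAux N m0 m G R dens T (extendPath z) fun _ => (⟨0, hN⟩ : Fin N)
  else 0

/-- Partial backward sampling: update at times in `J`, deterministic tracing elsewhere. -/
noncomputable def bsStepJ {N T : ℕ} (J : Finset (Fin T))
    (R : ℕ → (Fin N → 𝒳) → Measure (Fin N → Fin N)) (dens : ℕ → 𝒳 → 𝒳 → ℝ)
    (x : Fin (T + 1) → Fin N → 𝒳) (a : Fin T → Fin N → Fin N) (t : Fin T)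
    (B : Fin (T + 1) → Fin N) : Measure (Fin (T + 1) → Fin N) :=
  if t ∈ J then bsStep R dens x a t B
  else Measure.dirac (Function.update B t.castSucc (a t (B t.succ)))

noncomputable def bsLawJ {N T : ℕ} (J : Finset (Fin T))
    (R : ℕ → (Fin N → 𝒳) → Measure (Fin N → Fin N)) (dens : ℕ → 𝒳 → 𝒳 → ℝ)
    (x : Fin (T + 1) → Fin N → 𝒳) (a : Fin T → Fin N → Fin N) (nstar : Fin N) :
    Measure (Fin (T + 1) → Fin N) :=
  ((List.finRange T).reverse).foldl (fun μ t => μ.bind (bsStepJ J R dens x a t))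
    (Measure.dirac fun _ => nstar)

/-- The CPF kernel regarded as a Markov kernel on the extended space of
trajectories together with their ancestral lineage `(z_T^⋆, b_{0:T-1}^⋆, n^⋆)`. -/
noncomputable def extCPF (N : ℕ) (m0 : Measure 𝒳) (m : ℕ → Kernel 𝒳 𝒳)
    (G : ℕ → 𝒳 → ℝ) (R : ℕ → (Fin N → 𝒳) → Measure (Fin N → Fin N)) (T : ℕ)
    (s : (Fin (T + 1) → 𝒳) × (Fin (T + 1) → Fin N)) :
    Measure ((Fin (T + 1) → 𝒳) × (Fin (T + 1) → Fin N)) :=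
  (cpfSystem N m0 m R (extendPath s.1) (extendIdx s.2) T).bind fun p =>
    (select (G T) (p.1 (Fin.last T))).bind fun n =>
      Measure.dirac (traj p.1 p.2 n, lineage p.2 n)

/-- The CPF-BS(J) kernel (partial backward sampling) on the extended space. -/
noncomputable def extBSJ (N : ℕ) (m0 : Measure 𝒳) (m : ℕ → Kernel 𝒳 𝒳)
    (G : ℕ → 𝒳 → ℝ) (R : ℕ → (Fin N → 𝒳) → Measure (Fin N → Fin N))
    (dens : ℕ → 𝒳 → 𝒳 → ℝ) (T : ℕ) (J : Finset (Fin T))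
    (s : (Fin (T + 1) → 𝒳) × (Fin (T + 1) → Fin N)) :
    Measure ((Fin (T + 1) → 𝒳) × (Fin (T + 1) → Fin N)) :=
  (cpfSystem N m0 m R (extendPath s.1) (extendIdx s.2) T).bind fun p =>
    (select (G T) (p.1 (Fin.last T))).bind fun n =>
      (bsLawJ J R dens p.1 p.2 n).bind fun B =>
        Measure.dirac ((fun t => p.1 t (B t)), B)

/-- The CPF-BS kernel on the extended space. -/
noncomputable def extBS (N : ℕ) (m0 : Measure 𝒳) (m : ℕ → Kernel 𝒳 𝒳)
    (G : ℕ → 𝒳 → ℝ) (R : ℕ → (Fin N → 𝒳) → Measure (Fin N → Fin N))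
    (dens : ℕ → 𝒳 → 𝒳 → ℝ) (T : ℕ)
    (s : (Fin (T + 1) → 𝒳) × (Fin (T + 1) → Fin N)) :
    Measure ((Fin (T + 1) → 𝒳) × (Fin (T + 1) → Fin N)) :=
  extBSJ N m0 m G R dens T Finset.univ s

/-- Uniform distribution on a finite type. -/
noncomputable def uniformFin (α : Type*) [Fintype α] [MeasurableSpace α] : Measure α :=
  (Fintype.card α : ℝ≥0∞)⁻¹ • Measure.count

/-- The stationary law of `(Z_T^⋆, B_{0:T-1}^⋆, N^⋆)`, namely `Q_T ⊗ Uniform`. -/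
noncomputable def extTarget (N : ℕ) (m0 : Measure 𝒳) (m : ℕ → Kernel 𝒳 𝒳)
    (G : ℕ → 𝒳 → ℝ) (T : ℕ) :
    Measure ((Fin (T + 1) → 𝒳) × (Fin (T + 1) → Fin N)) :=
  (fkQ m0 m G T).prod (uniformFin (Fin (T + 1) → Fin N))

/-- `k`-fold iterate of a (measure-valued) Markov kernel. -/
noncomputable def iterateKernel {α : Type*} [MeasurableSpace α] (P : α → Measure α) :
    ℕ → α → Measure α
  | 0, x => Measure.dirac x
  | k + 1, x => (P x).bind (iterateKernel P k)

/-- The law of `(ξ_0, …, ξ_n)` for a Markov chain with initial law `μ` and kernel `P`. -/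
noncomputable def chainLaw {α : Type*} [MeasurableSpace α] (μ : Measure α)
    (P : α → Measure α) : (n : ℕ) → Measure (Fin (n + 1) → α)
  | 0 => μ.map fun z => fun _ => z
  | n + 1 => (chainLaw μ P n).bind fun ξ => (P (ξ (Fin.last n))).map fun z => Fin.snoc ξ z

/-- Forced-move selection probabilities (metropolised Gibbs step on `N^⋆`). -/
noncomputable def fmProb {N : ℕ} (w : Fin N → ℝ) (i0 n : Fin N) : ℝ :=
  if n = i0 then
    1 - ∑ j ∈ Finset.univ.erase i0, w j / (1 - w i0) * min ((1 - w i0) / (1 - w j)) 1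
  else w n / (1 - w i0) * min ((1 - w i0) / (1 - w n)) 1

noncomputable def fmSelect {N : ℕ} (G : 𝒳 → ℝ) (x : Fin N → 𝒳) (i0 : Fin N) :
    Measure (Fin N) :=
  ∑ n : Fin N, ENNReal.ofReal (fmProb (weight G x) i0 n) • Measure.dirac n

/-- The forced-move CPF kernel. -/
noncomputable def fmKernel (N : ℕ) (m0 : Measure 𝒳) (m : ℕ → Kernel 𝒳 𝒳)
    (G : ℕ → 𝒳 → ℝ) (R : ℕ → (Fin N → 𝒳) → Measure (Fin N → Fin N)) (T : ℕ)
    (z : Fin (T + 1) → 𝒳) : Measure (Fin (T + 1) → 𝒳) :=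
  if hN : 0 < N then
    (cpfSystem N m0 m R (extendPath z) (fun _ => (⟨0, hN⟩ : Fin N)) T).bind fun p =>
      (fmSelect (G T) (p.1 (Fin.last T)) ⟨0, hN⟩).bind fun n =>
        Measure.dirac (traj p.1 p.2 n)
  else 0

end ParticleGibbs

namespace ParticleGibbs

variable {𝒳 : Type*} [MeasurableSpace 𝒳]

/-- One step of the coupling of two conditional particle systems.  The state of each
particle is `(Z, Ž, coupled-flag)`; `xf`, `xcf` are the frozen values at the new time. -/
noncomputable def coupleStep (N : ℕ) (m : Kernel 𝒳 𝒳) (G : 𝒳 → ℝ) (xf xcf : 𝒳)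
    (s : Fin N → 𝒳 × 𝒳 × Bool) : Measure (Fin N → 𝒳 × 𝒳 × Bool) :=
  let xiC : ℝ := ∑ j, if (s j).2.2 then G (s j).1 else 0
  let xiCc : ℝ := ∑ j, if (s j).2.2 then 0 else G (s j).1
  let xiCcChk : ℝ := ∑ j, if (s j).2.2 then 0 else G (s j).2.1
  let lam : ℝ := xiC / (xiC + xiCc)
  let lamChk : ℝ := xiC / (xiC + xiCcChk)
  let mu : Measure 𝒳 :=
    ∑ j, (if (s j).2.2 then ENNReal.ofReal (G (s j).1 / xiC) else 0) • m (s j).1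
  let muC : Measure 𝒳 :=
    ∑ j, (if (s j).2.2 then 0 else ENNReal.ofReal (G (s j).1 / xiCc)) • m (s j).1
  let muCChk : Measure 𝒳 :=
    ∑ j, (if (s j).2.2 then 0 else ENNReal.ofReal (G (s j).2.1 / xiCcChk)) • m (s j).2.1
  let nu : Measure 𝒳 :=
    ENNReal.ofReal (|lam - lamChk| / (1 - min lam lamChk)) • mu +
      ENNReal.ofReal ((1 - max lam lamChk) / (1 - min lam lamChk)) • muC
  let nuChk : Measure 𝒳 :=
    ENNReal.ofReal (|lam - lamChk| / (1 - min lam lamChk)) • mu +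
      ENNReal.ofReal ((1 - max lam lamChk) / (1 - min lam lamChk)) • muCChk
  let kap : Measure (𝒳 × 𝒳) := if lam ≤ lamChk then muC.prod nuChk else nu.prod muCChk
  let pair : Measure (𝒳 × 𝒳 × Bool) :=
    ENNReal.ofReal (min lam lamChk) • mu.map (fun y => (y, y, true)) +
      (1 - ENNReal.ofReal (min lam lamChk)) • kap.map (fun q => (q.1, q.2, false))
  Measure.pi fun n : Fin N => if (n : ℕ) = 0 then Measure.dirac (xf, xcf, false) else pair

/-- The law of the coupled pair of conditional particle systems with frozen trajectories
`x` and `xc` (each relabelled as particle `0` of its system). -/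
noncomputable def coupledLaw (N : ℕ) (m0 : Measure 𝒳) (m : ℕ → Kernel 𝒳 𝒳)
    (G : ℕ → 𝒳 → ℝ) (x xc : ℕ → 𝒳) :
    (t : ℕ) → Measure (Fin (t + 1) → Fin N → 𝒳 × 𝒳 × Bool)
  | 0 => (Measure.pi fun n : Fin N =>
        if (n : ℕ) = 0 then Measure.dirac (x 0, xc 0, false)
        else m0.map fun y => (y, y, true)).map fun s0 => fun _ => s0
  | t + 1 => (coupledLaw N m0 m G x xc t).bind fun s =>
      (coupleStep N (m (t + 1)) (G t) (x (t + 1)) (xc (t + 1)) (s (Fin.last t))).map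
        fun snew => Fin.snoc s snew

/-- Number of coupled particles at time `t` of a coupled-system realisation. -/
def coupledCard {N t : ℕ} (ω : Fin (t + 1) → Fin N → 𝒳 × 𝒳 × Bool) (r : Fin (t + 1)) : ℕ :=
  (Finset.univ.filter fun n : Fin N => (ω r n).2.2 = true).card

/-! ### Residual and systematic resampling -/

/-- Integer part `⌊N W^n⌋` of the scaled weights. -/
noncomputable def floorCount (N : ℕ) (W : Fin N → ℝ) (n : Fin N) : ℕ := ⌊(N : ℝ) * W n⌋₊

/-- Residue `r^n = N W^n - ⌊N W^n⌋`. -/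
noncomputable def residue (N : ℕ) (W : Fin N → ℝ) (n : Fin N) : ℝ :=
  (N : ℝ) * W n - floorCount N W n

/-- Number of offspring of label `n` in the ancestor vector `a`. -/
def countLabel {N : ℕ} (a : Fin N → Fin N) (n : Fin N) : ℕ :=
  (Finset.univ.filter fun j => a j = n).card

/-- Number of offspring of label `n` in `a` excluding slot `b`. -/
def countLabelExcept {N : ℕ} (b : Fin N) (a : Fin N → Fin N) (n : Fin N) : ℕ :=
  ((Finset.univ.erase b).filter fun j => a j = n).card

/-- Label occupying slot `j` when stacking `c n` copies of each label `n`, sequentially. -/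
noncomputable def stackLabel (N : ℕ) (hN : 0 < N) (c : Fin N → ℕ) (j : ℕ) : Fin N :=
  if h : (Finset.univ.filter fun n : Fin N => j < ∑ i ∈ Finset.Iic n, c i).Nonempty
  then (Finset.univ.filter fun n : Fin N => j < ∑ i ∈ Finset.Iic n, c i).min' h
  else ⟨0, hN⟩

/-- Residual resampling before the random permutation: the first `∑ ⌊N W^n⌋` slots are
deterministic copies, the remaining slots are i.i.d. draws from the residual multinomial. -/
noncomputable def residualBase (N : ℕ) (W : Fin N → ℝ) : Measure (Fin N → Fin N) :=
  if hN : 0 < N then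
    Measure.pi fun j : Fin N =>
      if (j : ℕ) < ∑ n, floorCount N W n then
        Measure.dirac (stackLabel N hN (floorCount N W) (j : ℕ))
      else ∑ n : Fin N,
        ENNReal.ofReal (residue N W n / ∑ i, residue N W i) • Measure.dirac n
  else 0

/-- Residual resampling followed by a uniformly random permutation of the slots. -/
noncomputable def residualLaw (N : ℕ) (W : Fin N → ℝ) : Measure (Fin N → Fin N) :=
  (Fintype.card (Equiv.Perm (Fin N)) : ℝ≥0∞)⁻¹ •
    ∑ σ : Equiv.Perm (Fin N), (residualBase N W).map fun v => v ∘ σ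

/-- The label produced by systematic resampling for cursor position `u + n`:
the unique `m` with `S(m-1) ≤ u + n < S(m)`. -/
noncomputable def sysLabel (N : ℕ) (hN : 0 < N) (W : Fin N → ℝ) (u : ℝ) (n : Fin N) :
    Fin N :=
  if h : (Finset.univ.filter fun m : Fin N =>
      u + (n : ℝ) < (N : ℝ) * ∑ j ∈ Finset.Iic m, W j).Nonempty
  then (Finset.univ.filter fun m : Fin N =>
      u + (n : ℝ) < (N : ℝ) * ∑ j ∈ Finset.Iic m, W j).min' h
  else ⟨0, hN⟩

/-- Systematic resampling with cycle randomisation: `U ~ Uniform[0,1)`, a uniformly random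
`N`-cycle `c(n) = n + k`, and `A^n = Ā^{c(n)} = sysLabel U (n + k)`. -/
noncomputable def systematicLaw (N : ℕ) (W : Fin N → ℝ) : Measure (Fin N → Fin N) :=
  if hN : 0 < N then
    (N : ℝ≥0∞)⁻¹ • ∑ k : Fin N,
      ((volume : Measure ℝ).restrict (Set.Ico (0 : ℝ) 1)).map
        fun u => fun n : Fin N => sysLabel N hN W u (n + k)
  else 0

end ParticleGibbs

/-!
Both kernels run the same conditional particle system and differ only in how the output label is
drawn. Almost surely the frozen particle `i0` keeps the reference path `z` along its whole
lineage, so for `z ∉ 𝒜` only labels `n ≠ i0` contribute to the probability of `𝒜`. For those,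
`W^n / (1 - W^{i0}) · min ((1 - W^{i0}) / (1 - W^n)) 1 = min (W^n / (1 - W^n)) (W^n / (1 - W^{i0}))`
is at least `W^n`, so the inequality already holds before integrating over the particle system.
-/

namespace MeasureTheory.Measure

variable {α β ι : Type*} [MeasurableSpace α] [MeasurableSpace β]

theorem ae_bind_of_ae {μ : Measure α} {f : α → Measure β} {p : β → Prop}
    (hp : MeasurableSet {b | p b}) (h : ∀ᵐ a ∂μ, ∀ᵐ b ∂f a, p b) : ∀ᵐ b ∂μ.bind f, p b := by
  rw [ae_iff, ← nonpos_iff_eq_zero]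
  calc μ.bind f {b | ¬p b} ≤ ∫⁻ a, f a {b | ¬p b} ∂μ := bind_apply_le f hp.compl
    _ = ∫⁻ _, 0 ∂μ := lintegral_congr_ae (h.mono fun _ => ae_iff.1)
    _ = 0 := lintegral_zero

theorem sum_smul_dirac_bind_dirac [Fintype ι] [MeasurableSpace ι] [MeasurableSingletonClass ι]
    (c : ι → ℝ≥0∞) (x : ι → β) :
    (∑ i, c i • dirac i).bind (fun i => dirac (x i)) = ∑ i, c i • dirac (x i) := by
  have hx : Measurable x := measurable_of_finite x
  rw [bind_dirac_eq_map _ hx]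
  simp only [map_finset_sum' hx.aemeasurable, Measure.map_smul, map_dirac' hx]

theorem sum_smul_dirac_apply_mono [Fintype ι] {c c' : ι → ℝ≥0∞} {x : ι → β} {s : Set β}
    (hs : MeasurableSet s) (h : ∀ i, x i ∈ s → c i ≤ c' i) :
    (∑ i, c i • dirac (x i)) s ≤ (∑ i, c' i • dirac (x i)) s := by
  simp only [Measure.coe_finsetSum, Finset.sum_apply, Measure.smul_apply, dirac_apply' _ hs,
    smul_eq_mul]
  refine Finset.sum_le_sum fun i _ => ?_
  by_cases hi : x i ∈ s
  · simpa [hi] using h i hi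
  · simp [hi]

theorem measurable_sum_smul_dirac [Fintype ι] {c : α → ι → ℝ≥0∞} {x : α → ι → β}
    (hc : ∀ i, Measurable (c · i)) (hx : ∀ i, Measurable (x · i)) :
    Measurable fun a => ∑ i, c a i • dirac (x a i) := by
  refine measurable_of_measurable_coe _ fun s hs => ?_
  simp only [Measure.coe_finsetSum, Finset.sum_apply, Measure.smul_apply, dirac_apply' _ hs,
    smul_eq_mul]
  fun_prop (disch := exact hs)

theorem bind_sum_smul_dirac_apply_mono [Fintype ι] {μ : Measure α} {c c' : α → ι → ℝ≥0∞}
    {x : α → ι → β} (hc : ∀ i, Measurable (c · i)) (hc' : ∀ i, Measurable (c' · i))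
    (hx : ∀ i, Measurable (x · i)) {s : Set β} (hs : MeasurableSet s)
    (h : ∀ᵐ a ∂μ, ∀ i, x a i ∈ s → c a i ≤ c' a i) :
    μ.bind (fun a => ∑ i, c a i • dirac (x a i)) s ≤
      μ.bind (fun a => ∑ i, c' a i • dirac (x a i)) s := by
  rw [bind_apply hs (measurable_sum_smul_dirac hc hx).aemeasurable,
    bind_apply hs (measurable_sum_smul_dirac hc' hx).aemeasurable]
  exact lintegral_mono_ae (h.mono fun a => sum_smul_dirac_apply_mono hs)

end MeasureTheory.Measure

theorem measurable_fin_snoc {β : Type*} [MeasurableSpace β] {n : ℕ} (x : Fin n → β) :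
    Measurable fun y : β => (Fin.snoc x y : Fin (n + 1) → β) := by
  refine measurable_pi_lambda _ fun r => ?_
  induction r using Fin.lastCases with
  | last => simpa using measurable_id'
  | cast r => simp

namespace ParticleGibbs

variable {𝒳 : Type*} {N : ℕ}

theorem weight_nonneg {G : 𝒳 → ℝ} (hG : ∀ y, 0 ≤ G y) (x : Fin N → 𝒳) (n : Fin N) :
    0 ≤ weight G x n :=
  div_nonneg (hG _) (Finset.sum_nonneg fun _ _ => hG _)

theorem weight_lt_one (hN : 1 < N) {G : 𝒳 → ℝ} (hG : ∀ y, 0 < G y) (x : Fin N → 𝒳)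
    (n : Fin N) : weight G x n < 1 := by
  have : Nontrivial (Fin N) := Fin.nontrivial_iff_two_le.mpr hN
  obtain ⟨j, hj⟩ := exists_ne n
  have hsum : G (x n) < ∑ k, G (x k) :=
    Finset.single_lt_sum hj (Finset.mem_univ n) (Finset.mem_univ j) (hG _)
      fun k _ _ => (hG _).le
  exact (div_lt_one ((hG _).trans hsum)).2 hsum

theorem le_fmProb_of_ne {w : Fin N → ℝ} {i0 n : Fin N} (hn : n ≠ i0) (hw0 : 0 ≤ w i0)
    (hw0' : w i0 < 1) (hwn : 0 ≤ w n) (hwn' : w n < 1) : w n ≤ fmProb w i0 n := by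
  have ha : 0 < 1 - w i0 := sub_pos.2 hw0'
  have hb : 0 < 1 - w n := sub_pos.2 hwn'
  rw [fmProb, if_neg hn, mul_min_of_nonneg _ _ (div_nonneg hwn ha.le), mul_one,
    div_mul_div_cancel₀ ha.ne']
  exact le_min (le_div_self hwn hb (by linarith)) (le_div_self hwn ha (by linarith))

theorem measurable_weight [MeasurableSpace 𝒳] {G : 𝒳 → ℝ} (hG : Measurable G) (n : Fin N) :
    Measurable fun x : Fin N → 𝒳 => weight G x n := by
  unfold weight
  fun_prop

theorem measurable_fmProb (i0 n : Fin N) : Measurable fun w : Fin N → ℝ => fmProb w i0 n := by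
  unfold fmProb
  split_ifs <;> fun_prop

theorem measurable_traj [MeasurableSpace 𝒳] {T : ℕ} (n : Fin N) :
    Measurable fun p : (Fin (T + 1) → Fin N → 𝒳) × (Fin T → Fin N → Fin N) =>
      traj p.1 p.2 n :=
  measurable_from_prod_countable_left fun a =>
    measurable_pi_lambda _ fun t =>
      (measurable_pi_apply (lineage a n t)).comp (measurable_pi_apply t)

theorem extendPath_apply {T : ℕ} (z : Fin (T + 1) → 𝒳) (r : Fin (T + 1)) :
    extendPath z r = z r := by
  simp [extendPath, Nat.min_eq_left (Nat.le_of_lt_succ r.isLt)]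

theorem ancAux_eq_of_forall_apply_eq {T : ℕ} {a : Fin T → Fin N → Fin N} {i0 : Fin N}
    (ha : ∀ s, a s i0 = i0) (k : ℕ) : ancAux T a i0 k = i0 := by
  induction k with
  | zero => rfl
  | succ k ih =>
    rw [ancAux]
    split_ifs
    · rw [ih, ha]
    · rfl

def frozenPaths (z : ℕ → 𝒳) (i0 : Fin N) (t : ℕ) :
    Set ((Fin (t + 1) → Fin N → 𝒳) × (Fin t → Fin N → Fin N)) :=
  {p | (∀ r : Fin (t + 1), p.1 r i0 = z r) ∧ ∀ s, p.2 s i0 = i0}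

theorem traj_eq_of_mem_frozenPaths {T : ℕ} {z : Fin (T + 1) → 𝒳} {i0 : Fin N}
    {p : (Fin (T + 1) → Fin N → 𝒳) × (Fin T → Fin N → Fin N)}
    (hp : p ∈ frozenPaths (extendPath z) i0 T) : traj p.1 p.2 i0 = z := by
  funext r
  rw [traj, lineage, ancAux_eq_of_forall_apply_eq hp.2, hp.1 r, extendPath_apply]

theorem measurableSet_frozenPaths [MeasurableSpace 𝒳] [MeasurableSingletonClass 𝒳]
    (z : ℕ → 𝒳) (i0 : Fin N) (t : ℕ) : MeasurableSet (frozenPaths z i0 t) := by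
  simp only [frozenPaths, Set.ofPred_and, Set.ofPred_forall]
  measurability

theorem snoc_mem_frozenPaths {z : ℕ → 𝒳} {i0 : Fin N} {t : ℕ}
    {p : (Fin (t + 1) → Fin N → 𝒳) × (Fin t → Fin N → Fin N)} (hp : p ∈ frozenPaths z i0 t)
    {a : Fin N → Fin N} (ha : a i0 = i0) {x : Fin N → 𝒳} (hx : x i0 = z (t + 1)) :
    (Fin.snoc p.1 x, Fin.snoc p.2 a) ∈ frozenPaths z i0 (t + 1) := by
  refine ⟨Fin.lastCases ?_ fun r => ?_, Fin.lastCases ?_ fun s => ?_⟩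
  · simpa using hx
  · simpa using hp.1 r
  · simpa using ha
  · simpa using hp.2 s

theorem ae_condAncestor_apply_eq (R : Measure (Fin N → Fin N)) (n j : Fin N) :
    ∀ᵐ a ∂condAncestor R n j, a n = j :=
  Measure.ae_smul_measure (ae_restrict_mem .of_discrete) _

theorem ae_pi_apply_eq_of_eq_dirac [MeasurableSpace 𝒳] [MeasurableSingletonClass 𝒳]
    {κ : Fin N → Measure 𝒳} [∀ n, SigmaFinite (κ n)] {i0 : Fin N} {y : 𝒳}
    (hκ : κ i0 = Measure.dirac y) : ∀ᵐ x ∂Measure.pi κ, x i0 = y :=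
  have hy : ∀ᵐ x ∂κ i0, x = y := by rw [hκ, ae_dirac_eq]; rfl
  Measure.tendsto_eval_ae_ae.eventually hy

theorem ae_mem_frozenPaths [MeasurableSpace 𝒳] [MeasurableSingletonClass 𝒳]
    {m0 : Measure 𝒳} [SigmaFinite m0] {m : ℕ → Kernel 𝒳 𝒳} [∀ t, IsFiniteKernel (m t)]
    (R : ℕ → (Fin N → 𝒳) → Measure (Fin N → Fin N)) (z : ℕ → 𝒳) (i0 : Fin N) (t : ℕ) :
    ∀ᵐ p ∂cpfSystem N m0 m R z (fun _ => i0) t, p ∈ frozenPaths z i0 t := by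
  induction t with
  | zero =>
    have : ∀ n, SigmaFinite (if n = i0 then Measure.dirac (z 0) else m0) := fun n => by
      split_ifs <;> infer_instance
    rw [cpfSystem]
    refine (ae_map_iff (by fun_prop) (measurableSet_frozenPaths z i0 0)).2 ?_
    filter_upwards [ae_pi_apply_eq_of_eq_dirac (if_pos rfl)] with x hx
    exact ⟨fun r => by rw [Fin.fin_one_eq_zero r]; exact hx, fun s => s.elim0⟩
  | succ t ih =>
    rw [cpfSystem]
    refine Measure.ae_bind_of_ae (measurableSet_frozenPaths z i0 _) ?_
    filter_upwards [ih] with p hp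
    refine Measure.ae_bind_of_ae (measurableSet_frozenPaths z i0 _) ?_
    filter_upwards [ae_condAncestor_apply_eq _ _ _] with a ha
    have : ∀ n, SigmaFinite (if n = i0 then Measure.dirac (z (t + 1))
        else m (t + 1) (p.1 (Fin.last t) (a n))) := fun n => by
      split_ifs <;> infer_instance
    have hsnoc : Measurable fun x : Fin N → 𝒳 => ((Fin.snoc p.1 x, Fin.snoc p.2 a) :
        (Fin (t + 2) → Fin N → 𝒳) × (Fin (t + 1) → Fin N → Fin N)) :=
      (measurable_fin_snoc p.1).prodMk measurable_const
    refine (ae_map_iff hsnoc.aemeasurable (measurableSet_frozenPaths z i0 _)).2 ?_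
    filter_upwards [ae_pi_apply_eq_of_eq_dirac (if_pos rfl)] with x hx
    exact snoc_mem_frozenPaths hp ha hx

end ParticleGibbs

namespace ParticleGibbs

variable {𝒳 : Type*} [MetricSpace 𝒳] [CompleteSpace 𝒳] [TopologicalSpace.SeparableSpace 𝒳]
  [MeasurableSpace 𝒳] [BorelSpace 𝒳]

theorem forced_move_peskun_dominates_general
    (T : ℕ) (N : ℕ) (hN : 2 ≤ N)
    (m0 : Measure 𝒳) (hm0 : IsProbabilityMeasure m0)
    (m : ℕ → Kernel 𝒳 𝒳) (hm : ∀ t, IsMarkovKernel (m t))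
    (G : ℕ → 𝒳 → ℝ) (hGmeas : ∀ t, Measurable (G t))
    (hGpos : ∀ t x, 0 < G t x)
    (R : ℕ → (Fin N → 𝒳) → Measure (Fin N → Fin N)) :
    ∀ (z : Fin (T + 1) → 𝒳) (A : Set (Fin (T + 1) → 𝒳)), MeasurableSet A → z ∉ A →
      cpfKernel N m0 m G R T z A ≤ fmKernel N m0 m G R T z A := by
  intro z A hA hzA
  have hN0 : 0 < N := by omega
  set i0 : Fin N := ⟨0, hN0⟩
  have hW : Measurable fun p : (Fin (T + 1) → Fin N → 𝒳) × (Fin T → Fin N → Fin N) =>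
      weight (G T) (p.1 (Fin.last T)) :=
    measurable_pi_lambda _ fun n => (measurable_weight (hGmeas T) n).comp (by fun_prop)
  rw [cpfKernel, fmKernel, dif_pos hN0, dif_pos hN0, cpfKernelAux]
  simp only [select, fmSelect, Measure.sum_smul_dirac_bind_dirac]
  refine Measure.bind_sum_smul_dirac_apply_mono
    (fun n => ENNReal.measurable_ofReal.comp ((measurable_pi_apply n).comp hW))
    (fun n => ENNReal.measurable_ofReal.comp ((measurable_fmProb i0 n).comp hW))
    measurable_traj hA ?_
  filter_upwards [ae_mem_frozenPaths R (extendPath z) i0 T] with p hp n hn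
  have hn0 : n ≠ i0 := by
    rintro rfl
    exact hzA (traj_eq_of_mem_frozenPaths hp ▸ hn)
  have hw0 := weight_nonneg (fun x => (hGpos T x).le) (p.1 (Fin.last T))
  have hw1 := weight_lt_one hN (hGpos T) (p.1 (Fin.last T))
  exact ENNReal.ofReal_le_ofReal (le_fmProb_of_ne hn0 (hw0 i0) (hw1 i0) (hw0 n) (hw1 n))

/-- Assuming the potentials are strictly positive and bounded, the forced-move CPF
kernel dominates the CPF kernel in Peskun ordering: for every `z_T` and measurable `𝒜`
with `z_T ∉ 𝒜`, `P^{FM}_T(z_T, 𝒜) ≥ P_T^N(z_T, 𝒜)`. -/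
theorem forced_move_peskun_dominates
    (T : ℕ) (hT : 1 ≤ T) (N : ℕ) (hN : 2 ≤ N)
    (m0 : Measure 𝒳) (hm0 : IsProbabilityMeasure m0)
    (m : ℕ → Kernel 𝒳 𝒳) (hm : ∀ t, IsMarkovKernel (m t))
    (G : ℕ → 𝒳 → ℝ) (hGmeas : ∀ t, Measurable (G t))
    (hGpos : ∀ t x, 0 < G t x)
    (g : ℕ → ℝ) (hGle : ∀ t x, G t x ≤ g t)
    (R : ℕ → (Fin N → 𝒳) → Measure (Fin N → Fin N))
    (hRprob : ∀ t x, IsProbabilityMeasure (R t x))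
    (hRmeas : ∀ t (s : Set (Fin N → Fin N)), MeasurableSet s → Measurable fun x => R t x s)
    (hRa : ∀ t (x : Fin N → 𝒳) (n j : Fin N),
      R t x {a | a n = j} = ENNReal.ofReal (weight (G t) x j))
    (hRb1 : ∀ t (x : Fin N → 𝒳) (k : Fin N),
      (R t x).map (fun a => fun n => a (n + k)) = R t x)
    (hRb2 : ∀ t (x : Fin N → 𝒳) (k : Fin N),
      (R t x).map (fun a => fun n => a n - k) = R t fun n => x (n + k)) :
    ∀ (z : Fin (T + 1) → 𝒳) (A : Set (Fin (T + 1) → 𝒳)), MeasurableSet A → z ∉ A →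
      cpfKernel N m0 m G R T z A ≤ fmKernel N m0 m G R T z A :=
  forced_move_peskun_dominates_general T N hN m0 hm0 m hm G hGmeas hGpos R

end ParticleGibbs
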